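/- Let f : ℝ^d → ℝ be β-smooth, convex, twice differentiable, and bounded below. Let ε > 0 and suppose η ≤ min{ε²/(6β(√β+ε)), ε/(4β)}. Given x with g = ∇f(x) and a symmetric matrix H_t with (η/(√β+ε))I ⪯ H_t ⪯ (η/ε)I, and any δ ∈ ℝ^d, the point x⁺ = x − H_t(g + δ) satisfies f(x⁺) ≤ f(x) − (η/(2(√β+ε)))‖g‖² + (η/ε)‖δ‖². -/

import Mathlib

open InnerProductSpace

lemma descent {F : Type*} [NormedAddCommGroup F] [InnerProductSpace ℝ F] [CompleteSpace F]
    (f : F → ℝ) (β : ℝ) (hβ : 0 ≤ β) (hdiff : ContDiff ℝ 2 f)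
    (hsmooth : ∀ x y : F, ‖gradient f x - gradient f y‖ ≤ β * ‖x - y‖) (x v : F) :
    f (x + v) ≤ f x + inner ℝ (gradient f x) v + β / 2 * ‖v‖ ^ 2 := by
  have hd : ∀ y : F, DifferentiableAt ℝ f y := fun y =>
    (hdiff.differentiable (by norm_num)).differentiableAt
  set g : ℝ → ℝ := fun t => f (x + t • v) - t * inner ℝ (gradient f x) v - β / 2 * t ^ 2 * ‖v‖ ^ 2
    with hg
  have hline : ∀ t : ℝ, HasDerivAt (fun t : ℝ => x + t • v) v t := fun t => by
    simpa using ((hasDerivAt_id t).smul_const v).const_add x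
  have hder : ∀ t : ℝ, HasDerivAt g
      ((inner ℝ (gradient f (x + t • v)) v : ℝ) - inner ℝ (gradient f x) v - β / 2 * (2 * t) * ‖v‖ ^ 2)
      t := by
    intro t
    have h1 : HasDerivAt (fun t : ℝ => f (x + t • v)) (inner ℝ (gradient f (x + t • v)) v) t := by
      have := ((hd (x + t • v)).hasGradientAt.hasFDerivAt).comp_hasDerivAt t (hline t)
      rw [show (inner ℝ (gradient f (x + t • v)) v : ℝ) = (toDual ℝ F (gradient f (x + t • v))) v by
        rw [toDual_apply_apply]]
      exact this
    have h2 : HasDerivAt (fun t : ℝ => t * (inner ℝ (gradient f x) v : ℝ))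
        (inner ℝ (gradient f x) v) t := by
      simpa using (hasDerivAt_id t).mul_const (inner ℝ (gradient f x) v : ℝ)
    have h3 : HasDerivAt (fun t : ℝ => β / 2 * t ^ 2 * ‖v‖ ^ 2) (β / 2 * (2 * t) * ‖v‖ ^ 2) t := by
      have := ((hasDerivAt_pow 2 t).const_mul (β / 2)).mul_const (‖v‖ ^ 2)
      rw [show β / 2 * (2 * t) * ‖v‖ ^ 2 = β / 2 * (((2:ℕ):ℝ) * t ^ (2 - 1)) * ‖v‖ ^ 2 by norm_num]
      exact this
    exact (h1.sub h2).sub h3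
  have hnonpos : ∀ t ∈ Set.Ioo (0:ℝ) 1, deriv g t ≤ 0 := by
    intro t ht
    rw [(hder t).deriv]
    have key : (inner ℝ (gradient f (x + t • v) - gradient f x) v : ℝ) ≤ β * t * ‖v‖ ^ 2 := by
      have h3 := hsmooth (x + t • v) x
      simp only [add_sub_cancel_left, norm_smul, Real.norm_eq_abs,
        abs_of_nonneg ht.1.le] at h3
      calc (inner ℝ (gradient f (x + t • v) - gradient f x) v : ℝ)
          ≤ ‖gradient f (x + t • v) - gradient f x‖ * ‖v‖ := real_inner_le_norm _ _
        _ ≤ β * (t * ‖v‖) * ‖v‖ := by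
            exact mul_le_mul_of_nonneg_right h3 (norm_nonneg v)
        _ = β * t * ‖v‖ ^ 2 := by ring
    rw [inner_sub_left] at key
    linarith
  have hcont : ContinuousOn g (Set.Icc (0:ℝ) 1) :=
    fun t _ => ((hder t).continuousAt).continuousWithinAt
  have hanti : AntitoneOn g (Set.Icc (0:ℝ) 1) := by
    apply antitoneOn_of_deriv_nonpos (convex_Icc 0 1) hcont
    · intro t ht
      rw [interior_Icc] at ht
      exact ((hder t).differentiableAt).differentiableWithinAt
    · intro t ht
      rw [interior_Icc] at ht
      exact hnonpos t ht
  have := hanti (Set.left_mem_Icc.2 zero_le_one) (Set.right_mem_Icc.2 zero_le_one) zero_le_one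
  simp only [hg, one_smul, zero_smul, add_zero, one_mul, zero_mul, mul_zero] at this
  nlinarith [this]

lemma quad_expand {F : Type*} [NormedAddCommGroup F] [InnerProductSpace ℝ F]
    (A : F →ₗ[ℝ] F) (hsym : ∀ v w : F, (inner ℝ (A v) w : ℝ) = inner ℝ v (A w))
    (v w : F) (c c' : ℝ) :
    (inner ℝ (c • v + c' • w) (A (c • v + c' • w)) : ℝ) =
      c ^ 2 * inner ℝ v (A v) + 2 * (c * c') * inner ℝ v (A w) + c' ^ 2 * inner ℝ w (A w) := by
  have hwv : (inner ℝ w (A v) : ℝ) = inner ℝ v (A w) := by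
    rw [← hsym v w, real_inner_comm]
  simp only [map_add, map_smul, inner_add_left, inner_add_right,
    real_inner_smul_left, real_inner_smul_right, hwv]
  ring

lemma arith (F1 Fx Qg Qd cr ng nd nu a b β : ℝ)
    (hdesc : F1 ≤ Fx - (Qg + cr) + β / 2 * nu)
    (hu2 : nu ≤ b * (Qg + 2 * cr + Qd))
    (hBb : β * b ≤ 1 / 6) (hβ : 0 ≤ β) (hb : 0 ≤ b)
    (hcross : 0 ≤ 3 / 10 * Qg + cr + 5 / 6 * Qd)
    (hQgl : a * ng ≤ Qg) (hQdu : Qd ≤ b * nd) (hQd0 : 0 ≤ Qd) (hQg0 : 0 ≤ Qg)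
    (hT5 : 0 ≤ a * ng) (hT6 : 0 ≤ b * nd) :
    F1 ≤ Fx - a / 2 * ng + b * nd := by
  nlinarith [hdesc, hQgl, hQdu, hQd0, hQg0, hT5, hT6,
    mul_le_mul_of_nonneg_left hu2 (by linarith : (0:ℝ) ≤ β / 2),
    mul_nonneg (by linarith : (0:ℝ) ≤ 1 - β * b) hcross,
    mul_le_mul_of_nonneg_right hBb hQg0,
    mul_nonneg (mul_nonneg hβ hb) hQd0]

theorem stmt_6 (d : ℕ) (f : EuclideanSpace ℝ (Fin d) → ℝ) (β ε η : ℝ)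
    (hβ : 0 < β) (hε : 0 < ε)
    (hdiff : ContDiff ℝ 2 f) (hconv : ConvexOn ℝ Set.univ f)
    (hsmooth : ∀ x y : EuclideanSpace ℝ (Fin d),
      ‖gradient f x - gradient f y‖ ≤ β * ‖x - y‖)
    (hbdd : BddBelow (Set.range f))
    (hη : η ≤ min (ε ^ 2 / (6 * β * (Real.sqrt β + ε))) (ε / (4 * β)))
    (x : EuclideanSpace ℝ (Fin d)) (Ht : Matrix (Fin d) (Fin d) ℝ)
    (hHt : Ht.IsHermitian)
    (hlow : ∀ v : EuclideanSpace ℝ (Fin d),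
      (η / (Real.sqrt β + ε)) * ‖v‖ ^ 2 ≤ (inner ℝ v (Matrix.toEuclideanLin Ht v) : ℝ))
    (hup : ∀ v : EuclideanSpace ℝ (Fin d),
      (inner ℝ v (Matrix.toEuclideanLin Ht v) : ℝ) ≤ (η / ε) * ‖v‖ ^ 2)
    (δ : EuclideanSpace ℝ (Fin d)) :
    f (x - Matrix.toEuclideanLin Ht (gradient f x + δ)) ≤
      f x - (η / (2 * (Real.sqrt β + ε))) * ‖gradient f x‖ ^ 2 + (η / ε) * ‖δ‖ ^ 2 := by
  set A := Matrix.toEuclideanLin Ht with hA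
  set s := Real.sqrt β with hs
  have hs0 : 0 < s := Real.sqrt_pos.2 hβ
  have hse : 0 < s + ε := by linarith
  have hadj : A = LinearMap.adjoint A := by
    rw [hA, ← Matrix.toEuclideanLin_conjTranspose_eq_adjoint, hHt.eq]
  have hsym : ∀ v w : EuclideanSpace ℝ (Fin d), (inner ℝ (A v) w : ℝ) = inner ℝ v (A w) := by
    intro v w
    conv_lhs => rw [hadj]
    exact LinearMap.adjoint_inner_left A w v
  have expand := quad_expand A hsym
  rcases isEmpty_or_nonempty (Fin d) with hemp | ⟨⟨i⟩⟩
  · have h1 : ∀ v : EuclideanSpace ℝ (Fin d), v = 0 := fun v => Subsingleton.elim _ _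
    rw [h1 (gradient f x), h1 δ, show x - A (0 + 0) = x from by
      rw [h1 (x - A (0 + 0)), h1 x]]
    simp
  · -- η ≥ 0
    have hη0 : 0 ≤ η := by
      set e := EuclideanSpace.single i (1:ℝ) with he
      have hne : ‖e‖ = 1 := by simp [he, EuclideanSpace.norm_single]
      have h1 := le_trans (hlow e) (hup e)
      rw [hne, one_pow, mul_one, mul_one, div_le_div_iff₀ hse hε] at h1
      nlinarith
    rcases eq_or_lt_of_le hη0 with hη0' | hη0'
    · -- η = 0
      have hQ0 : ∀ v : EuclideanSpace ℝ (Fin d), (inner ℝ v (A v) : ℝ) = 0 := fun v =>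
        le_antisymm (by simpa [← hη0'] using hup v) (by simpa [← hη0'] using hlow v)
      have hA0 : ∀ v : EuclideanSpace ℝ (Fin d), A v = 0 := by
        intro v
        have h1 := expand v (A v) 1 1
        rw [one_smul, one_smul, hQ0 v, hQ0 (A v), hQ0 (v + A v)] at h1
        have h2 : (inner ℝ (A v) (A v) : ℝ) = 0 := by
          rw [← hsym v (A v)] at h1
          rw [real_inner_comm]
          linarith
        rwa [inner_self_eq_zero] at h2
      rw [hA0, sub_zero, ← hη0']
      simp
    · -- main case η > 0
      set g := gradient f x with hg
      have ha0 : 0 < η / (s + ε) := div_pos hη0' hse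
      have hb0 : 0 < η / ε := div_pos hη0' hε
      set h := g + δ with hh
      set u := A h with hu
      have hQpos : ∀ v : EuclideanSpace ℝ (Fin d), 0 ≤ (inner ℝ v (A v) : ℝ) := fun v =>
        le_trans (by positivity) (hlow v)
      -- β * (η/ε) ≤ 1/6
      have hBb : β * (η / ε) ≤ 1 / 6 := by
        have h1 : η ≤ ε ^ 2 / (6 * β * (s + ε)) := le_trans hη (min_le_left _ _)
        have h2 : η * (6 * β * (s + ε)) ≤ ε ^ 2 := by
          rwa [le_div_iff₀ (by positivity)] at h1
        rw [mul_div_assoc', div_le_iff₀ hε]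
        nlinarith [mul_nonneg (mul_nonneg hβ.le hη0) hs0.le]
      -- cross term lower bound
      have hcross : 0 ≤ 3 / 10 * (inner ℝ g (A g) : ℝ) + inner ℝ g (A δ)
          + 5 / 6 * inner ℝ δ (A δ) := by
        have hc2 : Real.sqrt (3/10) ^ 2 = 3/10 := Real.sq_sqrt (by norm_num)
        have hc'2 : Real.sqrt (5/6) ^ 2 = 5/6 := Real.sq_sqrt (by norm_num)
        have hcc' : Real.sqrt (3/10) * Real.sqrt (5/6) = 1/2 := by
          rw [← Real.sqrt_mul (by norm_num),
            show (3/10 : ℝ) * (5/6) = (1/2)^2 by norm_num, Real.sqrt_sq (by norm_num)]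
        have h0 := hQpos (Real.sqrt (3/10) • g + Real.sqrt (5/6) • δ)
        rw [expand g δ _ _, hc2, hc'2, hcc'] at h0
        linarith
      -- norm of the step
      have hu2 : ‖u‖ ^ 2 ≤ (η / ε) * ((inner ℝ g (A g) : ℝ) + 2 * inner ℝ g (A δ)
          + inner ℝ δ (A δ)) := by
        have hQhe : (inner ℝ h (A h) : ℝ) =
            inner ℝ g (A g) + 2 * inner ℝ g (A δ) + inner ℝ δ (A δ) := by
          have h1 := expand g δ 1 1
          rw [one_smul, one_smul] at h1
          rw [hh, h1]; ring
        have h0 := hQpos ((η / ε) • h + (-1 : ℝ) • u)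
        rw [expand h u _ _] at h0
        have h1 : (inner ℝ h (A u) : ℝ) = ‖u‖ ^ 2 := by
          rw [← hsym h u, ← hu, real_inner_self_eq_norm_sq]
        have h2 : (inner ℝ u (A u) : ℝ) ≤ (η / ε) * ‖u‖ ^ 2 := hup u
        rw [h1, hQhe] at h0
        nlinarith [h0, h2, hb0]
      -- descent lemma
      have hdesc : f (x - u) ≤ f x - ((inner ℝ g (A g) : ℝ) + inner ℝ g (A δ))
          + β / 2 * ‖u‖ ^ 2 := by
        have hd := descent f β hβ.le hdiff hsmooth x (-u)
        rw [← sub_eq_add_neg, inner_neg_right, norm_neg, ← hg] at hd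
        have hgu : (inner ℝ g u : ℝ) = inner ℝ g (A g) + inner ℝ g (A δ) := by
          rw [hu, hh, map_add, inner_add_right]
        rw [hgu] at hd
        linarith
      have hgoal : η / (2 * (s + ε)) = (η / (s + ε)) / 2 := by rw [div_div, mul_comm]
      rw [hgoal]
      exact arith (f (x - u)) (f x) (inner ℝ g (A g)) (inner ℝ δ (A δ)) (inner ℝ g (A δ))
        (‖g‖ ^ 2) (‖δ‖ ^ 2) (‖u‖ ^ 2) (η / (s + ε)) (η / ε) β
        hdesc hu2 hBb hβ.le hb0.le hcross (hlow g) (hup δ) (hQpos δ) (hQpos g)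
        (by positivity) (by positivity)
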